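/- arXiv:2201.11854 — 5 statements merged into one kernel-verified Lean document; each statement's English description precedes it below -/
import Mathlib

section
/- Let Γ be a δ-near potential game (δ ≥ 0) with N players whose closest exact potential game has potential φ, and let Φ denote the mixed extension of φ. Suppose the players run decentralized fictitious play over a time-varying network satisfying the connectivity and weight assumptions, with initial estimates equal to the initial empirical frequencies. Then for every ε ≥ 0 there exist a constant C > 0 and a time T such that for all t ≥ T: if the joint empirical frequency f_t is not an (ε)-Nash equilibrium of Γ (f_t ∉ Σ_ε), then Φ(f_{t+1}) − Φ(f_t) ≥ (ε − N·δ)/(t+1) − C · log t / t². -/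
/-!
The potential `Φ` is multilinear and `f (t+1) = (1 - c) f t + c e(a (t+1))` with `c = 1/(t+1)`,
so up to `O(c²)` the increment `Φ(f (t+1)) - Φ(f t)` is `c` times the sum over players of the
potential gain of switching alone to `a (t+1) i`. In a `δ`-near potential game each such gain is
at least the player's utility gain minus `δ`. The action `a (t+1) i` is a best response to the
local estimates, which stay within `O(1/t)` of `f t`, so it is an `O(1/t)`-best response to `f t`;
when `f t` is not an `ε`-equilibrium some player can gain more than `ε`, hence the sum of utility
gains is at least `ε - O(1/t)`.

The `O(1/t)` consensus error comes from an infection argument: every node averages its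
neighbours' estimates of player `j`, while `j` itself holds the true value. Over a window of
`N · T_B` steps the excess of `j` over a common lower bound spreads along a path to every node,
damped by at most `η` per step, so the deviation contracts by `1 - η ^ (N T_B)` per window, while
`f` drifts only by `O(1/t)`.
-/

open scoped BigOperators

noncomputable section

/-- Mixed extension of a function on pure action profiles: players `Fin N`,
common action set `Fin K`, mixed profile `σ : Fin N → Fin K → ℝ`. -/
def mixedExt {N K : ℕ} (v : (Fin N → Fin K) → ℝ) (σ : Fin N → Fin K → ℝ) : ℝ :=
  ∑ a : Fin N → Fin K, v a * ∏ i, σ i (a i)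

/-- Includes the requirement that each `σ i` lies in the standard simplex. -/
def IsEpsNash {N K : ℕ} (u : Fin N → (Fin N → Fin K) → ℝ) (ε : ℝ)
    (σ : Fin N → Fin K → ℝ) : Prop :=
  (∀ i, σ i ∈ stdSimplex ℝ (Fin K)) ∧
    ∀ i : Fin N, ∀ τ ∈ stdSimplex ℝ (Fin K),
      mixedExt (u i) σ ≥ mixedExt (u i) (Function.update σ i τ) - ε

def eNorm {N K : ℕ} (x : Fin N → Fin K → ℝ) : ℝ :=
  Real.sqrt (∑ i, ∑ k, (x i k) ^ 2)

def IsPotential {N K : ℕ} (u : Fin N → (Fin N → Fin K) → ℝ)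
    (φ : (Fin N → Fin K) → ℝ) : Prop :=
  ∀ (i : Fin N) (a : Fin N → Fin K) (a' : Fin K),
    φ (Function.update a i a') - φ a = u i (Function.update a i a') - u i a

/-- The maximum pairwise difference between the games `u` and `v` is at most `δ`. -/
def PairwiseDiffLe {N K : ℕ} (u v : Fin N → (Fin N → Fin K) → ℝ) (δ : ℝ) : Prop :=
  ∀ (i : Fin N) (a : Fin N → Fin K) (a' : Fin K),
    |(u i (Function.update a i a') - u i a) - (v i (Function.update a i a') - v i a)| ≤ δ

def purePt {K : ℕ} (k : Fin K) : Fin K → ℝ := fun k' => if k' = k then 1 else 0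

open Finset Function

lemma purePt_mem_stdSimplex {K : ℕ} (k : Fin K) : purePt k ∈ stdSimplex ℝ (Fin K) := by
  convert ite_eq_mem_stdSimplex ℝ k using 2
  simp [purePt, eq_comm]

lemma abs_le_one_of_mem_stdSimplex {K : ℕ} {p : Fin K → ℝ} (hp : p ∈ stdSimplex ℝ (Fin K))
    (k : Fin K) : |p k| ≤ 1 :=
  abs_le.2 ⟨by linarith [hp.1 k], (mem_Icc_of_mem_stdSimplex hp k).2⟩

lemma abs_sub_le_one_of_mem_stdSimplex {K : ℕ} {p q : Fin K → ℝ}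
    (hp : p ∈ stdSimplex ℝ (Fin K)) (hq : q ∈ stdSimplex ℝ (Fin K)) (k : Fin K) :
    |p k - q k| ≤ 1 :=
  abs_sub_le_of_nonneg_of_le (hp.1 k) (mem_Icc_of_mem_stdSimplex hp k).2 (hq.1 k)
    (mem_Icc_of_mem_stdSimplex hq k).2

lemma abs_prod_sub_prod_le {ι : Type*} (s : Finset ι) {f g : ι → ℝ}
    (hf : ∀ i, |f i| ≤ 1) (hg : ∀ i, |g i| ≤ 1) :
    |∏ i ∈ s, f i - ∏ i ∈ s, g i| ≤ ∑ i ∈ s, |f i - g i| := by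
  classical
  induction s using Finset.induction_on with
  | empty => simp
  | insert x s hx ih =>
    have hgs : |∏ i ∈ s, g i| ≤ 1 := by
      rw [abs_prod]; exact prod_le_one (fun _ _ => abs_nonneg _) fun i _ => hg i
    rw [prod_insert hx, prod_insert hx, sum_insert hx]
    calc |f x * ∏ i ∈ s, f i - g x * ∏ i ∈ s, g i|
        = |f x * (∏ i ∈ s, f i - ∏ i ∈ s, g i) + (f x - g x) * ∏ i ∈ s, g i| := by ring_nf
      _ ≤ |f x| * |∏ i ∈ s, f i - ∏ i ∈ s, g i| + |f x - g x| * |∏ i ∈ s, g i| := by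
        rw [← abs_mul, ← abs_mul]; exact abs_add_le _ _
      _ ≤ 1 * ∑ i ∈ s, |f i - g i| + |f x - g x| * 1 := by
        gcongr
        · exact hf x
      _ = |f x - g x| + ∑ i ∈ s, |f i - g i| := by ring

section MixedExtension

variable {N K : ℕ}

/-- The mixed extension of `v` conditioned on player `i` playing `x`; it does not depend on
`σ i`. -/
def condMixedExt (v : (Fin N → Fin K) → ℝ) (σ : Fin N → Fin K → ℝ) (i : Fin N) (x : Fin K) :
    ℝ :=
  ∑ b : {j // j ≠ i} → Fin K, v ((Equiv.funSplitAt i (Fin K)).symm (x, b)) *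
    ∏ j : {j // j ≠ i}, σ j (b j)

lemma mixedExt_eq_sum_condMixedExt (v : (Fin N → Fin K) → ℝ) (σ : Fin N → Fin K → ℝ)
    (i : Fin N) : mixedExt v σ = ∑ x, σ i x * condMixedExt v σ i x := by
  unfold mixedExt condMixedExt
  rw [← (Equiv.funSplitAt i (Fin K)).symm.sum_comp, Fintype.sum_prod_type]
  refine sum_congr rfl fun x _ => ?_
  rw [mul_sum]
  refine sum_congr rfl fun b _ => ?_
  have hi : (Equiv.funSplitAt i (Fin K)).symm (x, b) i = x := by simp
  have hne (j : {j // j ≠ i}) : (Equiv.funSplitAt i (Fin K)).symm (x, b) j = b j := by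
    simp [j.2]
  rw [Fintype.prod_eq_mul_prod_subtype_ne _ i, hi]
  simp only [hne]
  ring

lemma condMixedExt_update (v : (Fin N → Fin K) → ℝ) (σ : Fin N → Fin K → ℝ) (i : Fin N)
    (τ : Fin K → ℝ) (x : Fin K) : condMixedExt v (update σ i τ) i x = condMixedExt v σ i x := by
  unfold condMixedExt
  refine sum_congr rfl fun b _ => congrArg _ (prod_congr rfl fun j _ => ?_)
  rw [update_of_ne j.2]

lemma mixedExt_update_eq_sum (v : (Fin N → Fin K) → ℝ) (σ : Fin N → Fin K → ℝ) (i : Fin N)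
    (τ : Fin K → ℝ) : mixedExt v (update σ i τ) = ∑ x, τ x * condMixedExt v σ i x := by
  simp only [mixedExt_eq_sum_condMixedExt v _ i, condMixedExt_update, update_self]

lemma mixedExt_update_purePt (v : (Fin N → Fin K) → ℝ) (σ : Fin N → Fin K → ℝ) (i : Fin N)
    (x : Fin K) : mixedExt v (update σ i (purePt x)) = condMixedExt v σ i x := by
  simp [mixedExt_update_eq_sum, purePt]

lemma mixedExt_update_add (v : (Fin N → Fin K) → ℝ) (σ : Fin N → Fin K → ℝ) (i : Fin N)
    (α β : ℝ) (y z : Fin K → ℝ) :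
    mixedExt v (update σ i (α • y + β • z)) =
      α * mixedExt v (update σ i y) + β * mixedExt v (update σ i z) := by
  simp only [mixedExt_update_eq_sum, mul_sum, ← sum_add_distrib, Pi.add_apply, Pi.smul_apply,
    smul_eq_mul]
  exact sum_congr rfl fun x _ => by ring

lemma funSplitAt_symm_eq_update (i : Fin N) (x y : Fin K) (b : {j // j ≠ i} → Fin K) :
    (Equiv.funSplitAt i (Fin K)).symm (y, b) =
      update ((Equiv.funSplitAt i (Fin K)).symm (x, b)) i y := by
  ext j
  rcases eq_or_ne j i with rfl | hj <;> simp [*]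

lemma abs_condMixedExt_sub_sub_le {v v' : (Fin N → Fin K) → ℝ} {σ : Fin N → Fin K → ℝ}
    (hσ : ∀ j, σ j ∈ stdSimplex ℝ (Fin K)) {i : Fin N} {x y : Fin K} {δ : ℝ}
    (h : ∀ a, |(v (update a i y) - v (update a i x)) - (v' (update a i y) - v' (update a i x))|
      ≤ δ) :
    |(condMixedExt v σ i y - condMixedExt v σ i x) -
      (condMixedExt v' σ i y - condMixedExt v' σ i x)| ≤ δ := by
  set e := (Equiv.funSplitAt i (Fin K)).symm
  have hx (b) : e (x, b) = update (e (x, b)) i x := funSplitAt_symm_eq_update i x x b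
  calc _ = |∑ b : {j // j ≠ i} → Fin K,
        ((v (e (y, b)) - v (e (x, b))) - (v' (e (y, b)) - v' (e (x, b)))) *
          ∏ j : {j // j ≠ i}, σ j (b j)| := by
        unfold condMixedExt
        simp only [← sum_sub_distrib]
        exact congrArg _ (sum_congr rfl fun b _ => by ring)
    _ ≤ ∑ b : {j // j ≠ i} → Fin K, δ * ∏ j : {j // j ≠ i}, σ j (b j) := by
        refine (abs_sum_le_sum_abs _ _).trans (sum_le_sum fun b _ => ?_)
        have hP : 0 ≤ ∏ j : {j // j ≠ i}, σ j (b j) := prod_nonneg fun j _ => (hσ j).1 _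
        rw [abs_mul, abs_of_nonneg hP]
        gcongr
        have hb := h (e (x, b))
        rwa [← hx b, ← funSplitAt_symm_eq_update i x y b] at hb
    _ = δ := by
        rw [← mul_sum, ← Fintype.prod_sum, prod_eq_one fun (j : {j // j ≠ i}) _ => (hσ j).2,
          mul_one]

lemma forall_update_mem_stdSimplex {σ : Fin N → Fin K → ℝ}
    (hσ : ∀ j, σ j ∈ stdSimplex ℝ (Fin K)) (i : Fin N) {p : Fin K → ℝ}
    (hp : p ∈ stdSimplex ℝ (Fin K)) : ∀ j, update σ i p j ∈ stdSimplex ℝ (Fin K) :=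
  (forall_update_iff σ fun _ q => q ∈ stdSimplex ℝ (Fin K)).2 ⟨hp, fun j _ => hσ j⟩

lemma abs_mixedExt_sub_le (v : (Fin N → Fin K) → ℝ) {σ σ' : Fin N → Fin K → ℝ}
    (hσ : ∀ j, σ j ∈ stdSimplex ℝ (Fin K)) (hσ' : ∀ j, σ' j ∈ stdSimplex ℝ (Fin K)) {e : ℝ}
    (he : ∀ j k, |σ j k - σ' j k| ≤ e) :
    |mixedExt v σ - mixedExt v σ'| ≤ (∑ a, |v a|) * (N * e) := by
  unfold mixedExt
  rw [← sum_sub_distrib, sum_mul]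
  refine (abs_sum_le_sum_abs _ _).trans (sum_le_sum fun a _ => ?_)
  rw [← mul_sub, abs_mul]
  gcongr
  calc |∏ j, σ j (a j) - ∏ j, σ' j (a j)| ≤ ∑ j, |σ j (a j) - σ' j (a j)| :=
        abs_prod_sub_prod_le _ (fun j => abs_le_one_of_mem_stdSimplex (hσ j) _)
          (fun j => abs_le_one_of_mem_stdSimplex (hσ' j) _)
    _ ≤ ∑ _j : Fin N, e := sum_le_sum fun j _ => he j _
    _ = N * e := by simp

lemma sub_le_mixedExt_potential_sub {u uhat : Fin N → (Fin N → Fin K) → ℝ}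
    {φ : (Fin N → Fin K) → ℝ} {δ : ℝ} (hpot : IsPotential uhat φ)
    (hnear : PairwiseDiffLe u uhat δ) {σ : Fin N → Fin K → ℝ}
    (hσ : ∀ j, σ j ∈ stdSimplex ℝ (Fin K)) (i : Fin N) (y : Fin K) :
    mixedExt (u i) (update σ i (purePt y)) - mixedExt (u i) σ - δ ≤
      mixedExt φ (update σ i (purePt y)) - mixedExt φ σ := by
  have hdev (x : Fin K) : condMixedExt (u i) σ i y - condMixedExt (u i) σ i x - δ ≤
      condMixedExt φ σ i y - condMixedExt φ σ i x := by
    have h := abs_condMixedExt_sub_sub_le (v := φ) (v' := u i) hσ (x := x) (y := y) (δ := δ)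
      fun a => by
        have hφ := hpot i (update a i x) y
        have hu := hnear i (update a i x) y
        simp only [update_idem] at hφ hu
        rw [hφ, abs_sub_comm]
        exact hu
    linarith [(abs_le.1 h).1]
  have hs := (hσ i).2
  rw [mixedExt_update_purePt, mixedExt_update_purePt, mixedExt_eq_sum_condMixedExt _ σ i,
    mixedExt_eq_sum_condMixedExt φ σ i]
  calc _ = ∑ x, σ i x * (condMixedExt (u i) σ i y - condMixedExt (u i) σ i x - δ) := by
        simp only [mul_sub, sum_sub_distrib, ← sum_mul, hs, one_mul]
    _ ≤ ∑ x, σ i x * (condMixedExt φ σ i y - condMixedExt φ σ i x) :=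
        sum_le_sum fun x _ => mul_le_mul_of_nonneg_left (hdev x) ((hσ i).1 x)
    _ = _ := by simp only [mul_sub, sum_sub_distrib, ← sum_mul, hs, one_mul]

lemma mul_sub_le_mixedExt_update_sub (v : (Fin N → Fin K) → ℝ) {σ τ : Fin N → Fin K → ℝ}
    (hσ : ∀ j, σ j ∈ stdSimplex ℝ (Fin K)) (hτ : ∀ j, τ j ∈ stdSimplex ℝ (Fin K)) {c : ℝ}
    (hc0 : 0 ≤ c) (hclose : ∀ j k, |τ j k - σ j k| ≤ c) {i : Fin N} (hi : τ i = σ i)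
    {p : Fin K → ℝ} (hp : p ∈ stdSimplex ℝ (Fin K)) :
    c * (mixedExt v (update σ i p) - mixedExt v σ) - 2 * ((∑ a, |v a|) * (N * c)) * c ≤
      mixedExt v (update τ i ((1 - c) • σ i + c • p)) - mixedExt v τ := by
  have hupd := abs_mixedExt_sub_le v (forall_update_mem_stdSimplex hτ i hp)
    (forall_update_mem_stdSimplex hσ i hp) (e := c) fun j k => by
      rcases eq_or_ne j i with rfl | hj
      · simpa using hc0
      · simpa [hj] using hclose j k
  have hbase := abs_mixedExt_sub_le v hτ hσ hclose
  have hdiff : mixedExt v (update σ i p) - mixedExt v σ - 2 * ((∑ a, |v a|) * (N * c)) ≤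
      mixedExt v (update τ i p) - mixedExt v τ := by
    linarith [(abs_le.1 hupd).1, (abs_le.1 hbase).2]
  rw [mixedExt_update_add, ← hi, update_eq_self]
  linarith [mul_le_mul_of_nonneg_left hdiff hc0]

/-- Move the players from `σ` towards `ρ` one at a time; each move is affine in the moving
player's strategy, and the earlier moves shift the other strategies by at most `c`. -/
lemma mul_sum_sub_le_mixedExt_sub (v : (Fin N → Fin K) → ℝ) {σ ρ : Fin N → Fin K → ℝ}
    (hσ : ∀ j, σ j ∈ stdSimplex ℝ (Fin K)) (hρ : ∀ j, ρ j ∈ stdSimplex ℝ (Fin K)) {c : ℝ}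
    (hc0 : 0 ≤ c) (hc1 : c ≤ 1) :
    c * ∑ i, (mixedExt v (update σ i (ρ i)) - mixedExt v σ) - 2 * N ^ 2 * (∑ a, |v a|) * c ^ 2
      ≤ mixedExt v (fun j => (1 - c) • σ j + c • ρ j) - mixedExt v σ := by
  set mix : Finset (Fin N) → Fin N → Fin K → ℝ :=
    fun s j => if j ∈ s then (1 - c) • σ j + c • ρ j else σ j
  have hmix (s j) : mix s j ∈ stdSimplex ℝ (Fin K) := by
    simp only [mix]
    split
    · exact convex_stdSimplex ℝ _ (hσ j) (hρ j) (by linarith) hc0 (by ring)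
    · exact hσ j
  have hmix_close (s j k) : |mix s j k - σ j k| ≤ c := by
    simp only [mix]
    split
    · rw [show ((1 - c) • σ j + c • ρ j) k - σ j k = c * (ρ j k - σ j k) by simp; ring,
        abs_mul, abs_of_nonneg hc0]
      exact mul_le_of_le_one_right hc0 (abs_sub_le_one_of_mem_stdSimplex (hρ j) (hσ j) k)
    · simpa using hc0
  have key (s : Finset (Fin N)) :
      c * ∑ i ∈ s, (mixedExt v (update σ i (ρ i)) - mixedExt v σ) -
          #s * (2 * ((∑ a, |v a|) * (N * c)) * c) ≤ mixedExt v (mix s) - mixedExt v σ := by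
    induction s using Finset.induction_on with
    | empty => simp [mix]
    | insert i s hi ih =>
      have hinsert : mix (insert i s) = update (mix s) i ((1 - c) • σ i + c • ρ i) := by
        ext j : 1
        rcases eq_or_ne j i with rfl | hj
        · simp [mix]
        · simp [mix, hj]
      have hstep := mul_sub_le_mixedExt_update_sub v hσ (hmix s) hc0 (hmix_close s)
        (if_neg hi) (hρ i)
      rw [sum_insert hi, card_insert_of_notMem hi, hinsert]
      push_cast
      linarith
  have hfull : mix univ = fun j => (1 - c) • σ j + c • ρ j := by
    ext j : 1
    simp [mix]
  have := key univ
  rw [hfull, card_univ, Fintype.card_fin] at this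
  linarith

lemma mixedExt_update_le_of_forall_purePt_le (v : (Fin N → Fin K) → ℝ)
    {σ σ' : Fin N → Fin K → ℝ} (hσ : ∀ j, σ j ∈ stdSimplex ℝ (Fin K))
    (hσ' : ∀ j, σ' j ∈ stdSimplex ℝ (Fin K)) {e : ℝ} (he : ∀ j k, |σ j k - σ' j k| ≤ e)
    {i : Fin N} {b : Fin K}
    (hb : ∀ k, mixedExt v (update σ' i (purePt k)) ≤ mixedExt v (update σ' i (purePt b)))
    {τ : Fin K → ℝ} (hτ : τ ∈ stdSimplex ℝ (Fin K)) :
    mixedExt v (update σ i τ) ≤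
      mixedExt v (update σ i (purePt b)) + 2 * ((∑ a, |v a|) * (N * e)) := by
  set E := (∑ a, |v a|) * (N * e)
  have hclose (k : Fin K) :
      |mixedExt v (update σ i (purePt k)) - mixedExt v (update σ' i (purePt k))| ≤ E :=
    abs_mixedExt_sub_le v (forall_update_mem_stdSimplex hσ i (purePt_mem_stdSimplex k))
      (forall_update_mem_stdSimplex hσ' i (purePt_mem_stdSimplex k)) fun j k' => by
        rcases eq_or_ne j i with rfl | hj
        · simpa using (abs_nonneg _).trans (he j k')
        · simpa [hj] using he j k'
  have hpure (k : Fin K) :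
      mixedExt v (update σ i (purePt k)) ≤ mixedExt v (update σ i (purePt b)) + 2 * E := by
    linarith [(abs_le.1 (hclose k)).2, (abs_le.1 (hclose b)).1, hb k]
  rw [mixedExt_update_eq_sum]
  simp only [← mixedExt_update_purePt]
  calc ∑ x, τ x * mixedExt v (update σ i (purePt x))
      ≤ ∑ x, τ x * (mixedExt v (update σ i (purePt b)) + 2 * E) :=
        sum_le_sum fun x _ => mul_le_mul_of_nonneg_left (hpure x) (hτ.1 x)
    _ = mixedExt v (update σ i (purePt b)) + 2 * E := by rw [← sum_mul, hτ.2, one_mul]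

lemma sub_le_sum_mixedExt_potential_sub {u uhat : Fin N → (Fin N → Fin K) → ℝ}
    {φ : (Fin N → Fin K) → ℝ} {δ : ℝ} (hpot : IsPotential uhat φ)
    (hnear : PairwiseDiffLe u uhat δ) {σ : Fin N → Fin K → ℝ}
    (hσ : ∀ j, σ j ∈ stdSimplex ℝ (Fin K)) {ε : ℝ} (hne : ¬ IsEpsNash u ε σ)
    {b : Fin N → Fin K} {e : ℝ}
    (hb : ∀ i, ∀ τ ∈ stdSimplex ℝ (Fin K),
      mixedExt (u i) (update σ i τ) ≤ mixedExt (u i) (update σ i (purePt (b i))) + e) :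
    ε - N * (e + δ) ≤ ∑ i, (mixedExt φ (update σ i (purePt (b i))) - mixedExt φ σ) := by
  obtain ⟨i₀, τ, hτ, hdev⟩ : ∃ i₀, ∃ τ ∈ stdSimplex ℝ (Fin K),
      mixedExt (u i₀) σ < mixedExt (u i₀) (update σ i₀ τ) - ε := by
    by_contra! h
    exact hne ⟨hσ, h⟩
  have hgain (i : Fin N) : (if i = i₀ then ε else 0) - (e + δ) ≤
      mixedExt φ (update σ i (purePt (b i))) - mixedExt φ σ := by
    have hφ := sub_le_mixedExt_potential_sub hpot hnear hσ i (b i)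
    split_ifs with h
    · subst h
      linarith [hb i τ hτ]
    · have hself := hb i (σ i) (hσ i)
      rw [update_eq_self] at hself
      linarith
  calc ε - N * (e + δ) = ∑ i, ((if i = i₀ then ε else 0) - (e + δ)) := by
        simp [sum_sub_distrib, mul_add]
    _ ≤ _ := sum_le_sum fun i _ => hgain i

end MixedExtension

section Consensus

variable {V : Type*} [Fintype V]

lemma add_mul_sub_le_sum_mul {w x : V → ℝ} {β : ℝ} (hw : ∀ l, 0 ≤ w l)
    (hsum : ∑ l, w l = 1) (hx : ∀ l, β ≤ x l) (l₀ : V) :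
    β + w l₀ * (x l₀ - β) ≤ ∑ l, w l * x l := by
  have hsplit : ∑ l, w l * x l = β + ∑ l, w l * (x l - β) := by
    simp only [mul_sub, sum_sub_distrib, ← sum_mul, hsum]
    ring
  rw [hsplit]
  gcongr
  exact single_le_sum (f := fun l => w l * (x l - β))
    (fun l _ => mul_nonneg (hw l) (sub_nonneg.2 (hx l))) (mem_univ l₀)

/-- `x` evolves by averaging with the row-stochastic weights `W r` at every node except the
anchor `j`, whose trajectory is arbitrary. -/
structure IsAnchoredAveraging (W : ℕ → V → V → ℝ) (x : ℕ → V → ℝ) (j : V) : Prop where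
  nonneg : ∀ r i l, 0 ≤ W r i l
  sum_eq_one : ∀ r i, ∑ l, W r i l = 1
  succ_eq : ∀ r i, i ≠ j → x (r + 1) i = ∑ l, W r i l * x r l

namespace IsAnchoredAveraging

variable {W : ℕ → V → V → ℝ} {x : ℕ → V → ℝ} {j : V}

lemma neg (hx : IsAnchoredAveraging W x j) : IsAnchoredAveraging W (-x) j where
  nonneg := hx.nonneg
  sum_eq_one := hx.sum_eq_one
  succ_eq r i hi := by simp [hx.succ_eq r i hi]

lemma forall_le (hx : IsAnchoredAveraging W x j) {β : ℝ} {T : ℕ} (h0 : ∀ i, β ≤ x 0 i)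
    (hj : ∀ r ≤ T, β ≤ x r j) : ∀ r ≤ T, ∀ i, β ≤ x r i := by
  intro r
  induction r with
  | zero => exact fun _ => h0
  | succ r ih =>
    intro hr i
    rcases eq_or_ne i j with rfl | hi
    · exact hj _ hr
    · have hr' := ih (by omega)
      rw [hx.succ_eq r i hi]
      linarith [add_mul_sub_le_sum_mul (hx.nonneg r i) (hx.sum_eq_one r i) hr' i,
        mul_nonneg (hx.nonneg r i i) (sub_nonneg.2 (hr' i))]

lemma add_pow_succ_mul_le (hx : IsAnchoredAveraging W x j) {η β d : ℝ} (hη0 : 0 ≤ η)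
    (hη1 : η ≤ 1) (hd : 0 ≤ d) {r : ℕ} (hlb : ∀ l, β ≤ x r l) (hj : β + d ≤ x (r + 1) j)
    {i l : V} (hW : η ≤ W r i l) (hl : β + η ^ r * d ≤ x r l) :
    β + η ^ (r + 1) * d ≤ x (r + 1) i := by
  rcases eq_or_ne i j with rfl | hi
  · linarith [mul_le_of_le_one_left hd (pow_le_one₀ hη0 hη1 : η ^ (r + 1) ≤ 1)]
  · rw [hx.succ_eq r i hi]
    refine le_trans ?_ (add_mul_sub_le_sum_mul (hx.nonneg r i) (hx.sum_eq_one r i) hlb l)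
    have : η * (η ^ r * d) ≤ W r i l * (x r l - β) :=
      mul_le_mul hW (by linarith) (by positivity) (hx.nonneg r i l)
    linarith [show η ^ (r + 1) * d = η * (η ^ r * d) by ring]

/-- The excess of the anchor over `β` travels along a path to `j` one edge per window of
length `TB`, losing at most a factor `η` per step. -/
theorem add_pow_mul_le (hx : IsAnchoredAveraging W x j) {G : SimpleGraph V}
    (hG : G.Connected) {η β d : ℝ} {TB T : ℕ} (hη0 : 0 ≤ η) (hη1 : η ≤ 1) (hd : 0 ≤ d)
    (hself : ∀ r i, η ≤ W r i i)
    (hact : ∀ i l, G.Adj i l → ∀ m, ∃ τ < TB, η ≤ W (m * TB + τ) i l)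
    (hT : Fintype.card V * TB ≤ T) (h0 : ∀ i, β ≤ x 0 i) (hj : ∀ r ≤ T, β + d ≤ x r j) :
    ∀ i, β + η ^ T * d ≤ x T i := by
  have hlb := hx.forall_le h0 fun r hr => by linarith [hj r hr]
  have hstep {r : ℕ} (hr : r + 1 ≤ T) {i l : V} (hW : η ≤ W r i l)
      (hl : β + η ^ r * d ≤ x r l) : β + η ^ (r + 1) * d ≤ x (r + 1) i :=
    hx.add_pow_succ_mul_le hη0 hη1 hd (hlb r (by omega)) (hj _ hr) hW hl
  have hpersist (q : ℕ) {r : ℕ} {i : V} (hq : r + q ≤ T) (hi : β + η ^ r * d ≤ x r i) :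
      β + η ^ (r + q) * d ≤ x (r + q) i := by
    induction q with
    | zero => exact hi
    | succ q ih => exact hstep (by omega) (hself _ i) (ih (by omega))
  have hwalk {i : V} (p : G.Walk i j) (hp : p.length * TB ≤ T) :
      β + η ^ (p.length * TB) * d ≤ x (p.length * TB) i := by
    induction p with
    | nil => simpa using hj 0 (Nat.zero_le _)
    | @cons i l _ hil p ih =>
      rw [SimpleGraph.Walk.length_cons, add_mul, one_mul] at hp ⊢
      obtain ⟨τ, hτ, hW⟩ := hact i l hil p.length
      have hl := hpersist τ (by omega) (ih hx hj (by omega))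
      have hi := hpersist (TB - τ - 1) (by omega) (hstep (by omega) hW hl)
      rwa [show p.length * TB + τ + 1 + (TB - τ - 1) = p.length * TB + TB by omega] at hi
  intro i
  obtain ⟨p, hp⟩ := (hG.preconnected i j).exists_isPath
  have hlen : p.length * TB ≤ T := le_trans (Nat.mul_le_mul_right _ hp.length_lt.le) hT
  simpa [Nat.add_sub_cancel' hlen] using hpersist (T - p.length * TB) (by omega) (hwalk p hlen)

theorem abs_sub_anchor_le (hx : IsAnchoredAveraging W x j) {G : SimpleGraph V}
    (hG : G.Connected) {η : ℝ} {TB T : ℕ} (hη0 : 0 ≤ η) (hη1 : η ≤ 1)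
    (hself : ∀ r i, η ≤ W r i i)
    (hact : ∀ i l, G.Adj i l → ∀ m, ∃ τ < TB, η ≤ W (m * TB + τ) i l)
    (hT : Fintype.card V * TB ≤ T) {y : ℕ → ℝ} {d D : ℝ} (h0 : ∀ i, |x 0 i - y 0| ≤ d)
    (hxj : ∀ r ≤ T, x r j = y r) (hy : ∀ r ≤ T, |y r - y 0| ≤ D) :
    ∀ i, |x T i - y T| ≤ (1 - η ^ T) * d + 2 * D := by
  have hd : 0 ≤ d := (abs_nonneg _).trans (h0 j)
  have hD : 0 ≤ D := (abs_nonneg _).trans (hy 0 (Nat.zero_le _))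
  have hlow := hx.add_pow_mul_le hG hη0 hη1 hd hself hact hT (β := y 0 - d - D)
    (fun i => by linarith [(abs_le.1 (h0 i)).1])
    (fun r hr => by linarith [hxj r hr, (abs_le.1 (hy r hr)).1])
  have hup := hx.neg.add_pow_mul_le hG hη0 hη1 hd hself hact hT (β := -y 0 - d - D)
    (fun i => by simp only [Pi.neg_apply]; linarith [(abs_le.1 (h0 i)).2])
    (fun r hr => by simp only [Pi.neg_apply]; linarith [hxj r hr, (abs_le.1 (hy r hr)).2])
  intro i
  have hyT := abs_le.1 (hy T le_rfl)
  have hupi : -y 0 - d - D + η ^ T * d ≤ -x T i := hup i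
  rw [abs_le]
  constructor <;> linarith [hlow i]

end IsAnchoredAveraging

end Consensus

lemma exists_le_div_of_window_contraction {α : Type*} {e : ℕ → α → ℝ} {lam A : ℝ} {T : ℕ}
    (hT : 0 < T) (hlam0 : 0 < lam)
    (hle : ∀ t ≥ 1, ∀ p, e t p ≤ 1)
    (hstep : ∀ s ≥ 1, ∀ d ≥ 0, (∀ p, e s p ≤ d) → ∀ p, e (s + T) p ≤ (1 - lam) * d + A / s) :
    ∃ C > 0, ∀ t ≥ 1, ∀ p, e t p ≤ C / t := by
  obtain ⟨S, hS⟩ := exists_nat_ge (2 * T / lam)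
  set C : ℝ := max (T + S + 1 : ℕ) (4 * A / lam)
  have hC : ((T + S + 1 : ℕ) : ℝ) ≤ C := le_max_left _ _
  have hCA : 4 * A ≤ lam * C := by
    have : 4 * A / lam ≤ C := le_max_right _ _
    rw [div_le_iff₀ hlam0] at this
    linarith
  have hC0 : 0 < C := lt_of_lt_of_le (by positivity) hC
  refine ⟨C, hC0, fun t => ?_⟩
  induction t using Nat.strong_induction_on with
  | _ t ih =>
    intro ht p
    have htpos : (0 : ℝ) < t := by exact_mod_cast ht
    by_cases hsmall : t < T + S + 1
    · rw [le_div_iff₀ htpos]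
      have : (t : ℝ) ≤ C := le_trans (by exact_mod_cast hsmall.le) hC
      nlinarith [hle t ht p]
    · obtain ⟨s, rfl⟩ : ∃ s, t = s + T := ⟨t - T, by omega⟩
      have hs : (0 : ℝ) < s := by exact_mod_cast (show 0 < s by omega)
      have hsS : 2 * T ≤ lam * s := by
        have : (S : ℝ) + 1 ≤ s := by exact_mod_cast (show S + 1 ≤ s by omega)
        rw [div_le_iff₀ hlam0] at hS
        nlinarith
      refine (hstep s (by omega) (C / s) (by positivity) (ih s (by omega) (by omega)) p).trans ?_
      rw [← mul_div_assoc, ← add_div, div_le_div_iff₀ hs htpos]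
      push_cast
      nlinarith [mul_le_mul_of_nonneg_left hsS hC0.le, mul_le_mul_of_nonneg_left hCA hs.le,
        mul_le_mul_of_nonneg_left hCA (Nat.cast_nonneg T : (0 : ℝ) ≤ T),
        mul_nonneg (mul_nonneg hlam0.le hC0.le) (Nat.cast_nonneg T : (0 : ℝ) ≤ T)]

section DecentralizedFictitiousPlay

variable {N K : ℕ} {a : ℕ → Fin N → Fin K} {f : ℕ → Fin N → Fin K → ℝ}

lemma dfp_freq_succ
    (hfrec : ∀ t, 1 ≤ t → ∀ i k,
      f t i k = ((t : ℝ) - 1) / t * f (t - 1) i k + (1 / t) * purePt (a t i) k) (t : ℕ) :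
    f (t + 1) = fun i =>
      (1 - ((t : ℝ) + 1)⁻¹) • f t i + ((t : ℝ) + 1)⁻¹ • purePt (a (t + 1) i) := by
  ext i k
  rw [hfrec (t + 1) (by omega)]
  simp only [Nat.add_sub_cancel, Nat.cast_add, Nat.cast_one, Pi.add_apply, Pi.smul_apply,
    smul_eq_mul]
  field_simp

lemma dfp_freq_mem_stdSimplex (hf0 : ∀ i, f 0 i ∈ stdSimplex ℝ (Fin K))
    (hfrec : ∀ t, 1 ≤ t → ∀ i k,
      f t i k = ((t : ℝ) - 1) / t * f (t - 1) i k + (1 / t) * purePt (a t i) k) :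
    ∀ t i, f t i ∈ stdSimplex ℝ (Fin K) := by
  intro t
  induction t with
  | zero => exact hf0
  | succ t ih =>
    intro i
    rw [dfp_freq_succ hfrec]
    exact convex_stdSimplex ℝ _ (ih i) (purePt_mem_stdSimplex _)
      (sub_nonneg.2 (inv_le_one_of_one_le₀ (by linarith [t.cast_nonneg (α := ℝ)])))
      (by positivity) (by ring)

lemma dfp_freq_window_drift (hf : ∀ t i, f t i ∈ stdSimplex ℝ (Fin K))
    (hfrec : ∀ t, 1 ≤ t → ∀ i k,
      f t i k = ((t : ℝ) - 1) / t * f (t - 1) i k + (1 / t) * purePt (a t i) k)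
    {s : ℕ} (hs : 1 ≤ s) (i : Fin N) (k : Fin K) (r : ℕ) :
    |f (s + r) i k - f s i k| ≤ r / s := by
  have hs' : (1 : ℝ) ≤ s := by exact_mod_cast hs
  induction r with
  | zero => simp
  | succ r ih =>
    have hstep : |f (s + r + 1) i k - f (s + r) i k| ≤ 1 / s := by
      rw [dfp_freq_succ hfrec]
      simp only [Pi.add_apply, Pi.smul_apply, smul_eq_mul]
      rw [show ∀ c x y : ℝ, (1 - c) * x + c * y - x = c * (y - x) by intros; ring, abs_mul,
        abs_of_pos (by positivity)]
      calc _ ≤ ((s + r : ℕ) + 1 : ℝ)⁻¹ * 1 := by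
            gcongr
            exact abs_sub_le_one_of_mem_stdSimplex (purePt_mem_stdSimplex _) (hf _ i) k
        _ ≤ 1 / s := by
            rw [mul_one, one_div]
            gcongr
            push_cast
            linarith [r.cast_nonneg (α := ℝ)]
    calc |f (s + (r + 1)) i k - f s i k|
        ≤ |f (s + r + 1) i k - f (s + r) i k| + |f (s + r) i k - f s i k| := abs_sub_le _ _ _
      _ ≤ 1 / s + r / s := add_le_add hstep ih
      _ = ((r + 1 : ℕ) : ℝ) / s := by push_cast; ring

variable {w : ℕ → Fin N → Fin N → Fin N → ℝ} {υ : ℕ → Fin N → Fin N → Fin K → ℝ}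

lemma dfp_weight_nonneg (Adj : ℕ → Fin N → Fin N → Prop) {η : ℝ} (hη0 : 0 ≤ η)
    (hwpos : ∀ t, 1 ≤ t → ∀ j i l : Fin N, (Adj t i l ∨ l = i) → η ≤ w t j i l)
    (hwzero : ∀ t, 1 ≤ t → ∀ j i l : Fin N, ¬(Adj t i l ∨ l = i) → w t j i l = 0)
    (t : ℕ) (ht : 1 ≤ t) (j i l : Fin N) : 0 ≤ w t j i l := by
  by_cases h : Adj t i l ∨ l = i
  · exact hη0.trans (hwpos t ht j i l h)
  · exact (hwzero t ht j i l h).ge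

lemma dfp_estimate_mem_stdSimplex (hf : ∀ t i, f t i ∈ stdSimplex ℝ (Fin K))
    (hwnn : ∀ t, 1 ≤ t → ∀ j i l, 0 ≤ w t j i l)
    (hwsum : ∀ t, 1 ≤ t → ∀ j i, ∑ l, w t j i l = 1)
    (hυself : ∀ t, 1 ≤ t → ∀ i, υ t i i = f t i)
    (hυrec : ∀ t, 1 ≤ t → ∀ i j, j ≠ i → ∀ k, υ t i j k = ∑ l, w t j i l * υ (t - 1) l j k)
    (hinit : ∀ i j, υ 0 i j = f 0 j) :
    ∀ t i j, υ t i j ∈ stdSimplex ℝ (Fin K) := by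
  intro t
  induction t with
  | zero => exact fun i j => hinit i j ▸ hf 0 j
  | succ t ih =>
    intro i j
    rcases eq_or_ne j i with rfl | hji
    · exact hυself (t + 1) (by omega) j ▸ hf (t + 1) j
    · have hυ : υ (t + 1) i j = ∑ l, w (t + 1) j i l • υ t l j := by
        ext k
        simp [hυrec (t + 1) (by omega) i j hji k, Finset.sum_apply]
      rw [hυ]
      exact (convex_stdSimplex ℝ _).sum_mem (fun l _ => hwnn _ (by omega) j i l)
        (hwsum _ (by omega) j i) fun l _ => ih l j

theorem dfp_estimate_error_le (Adj : ℕ → Fin N → Fin N → Prop)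
    (hAdjSymm : ∀ t i j, Adj t i j → Adj t j i)
    (hconn : (SimpleGraph.fromRel fun i j : Fin N => {t : ℕ | Adj t i j}.Infinite).Connected)
    {TB : ℕ} (hTB : 0 < TB)
    (hcom : ∀ i j, {t : ℕ | Adj t i j}.Infinite → ∀ t, 1 ≤ t → ∃ τ < TB, Adj (t + τ) i j)
    {η : ℝ} (hη0 : 0 < η) (hη1 : η ≤ 1)
    (hwpos : ∀ t, 1 ≤ t → ∀ j i l : Fin N, (Adj t i l ∨ l = i) → η ≤ w t j i l)
    (hwnn : ∀ t, 1 ≤ t → ∀ j i l, 0 ≤ w t j i l)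
    (hwsum : ∀ t, 1 ≤ t → ∀ j i, ∑ l, w t j i l = 1)
    (hf : ∀ t i, f t i ∈ stdSimplex ℝ (Fin K))
    (hfrec : ∀ t, 1 ≤ t → ∀ i k,
      f t i k = ((t : ℝ) - 1) / t * f (t - 1) i k + (1 / t) * purePt (a t i) k)
    (hυ : ∀ t i j, υ t i j ∈ stdSimplex ℝ (Fin K))
    (hυself : ∀ t, 1 ≤ t → ∀ i, υ t i i = f t i)
    (hυrec : ∀ t, 1 ≤ t → ∀ i j, j ≠ i → ∀ k, υ t i j k = ∑ l, w t j i l * υ (t - 1) l j k) :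
    ∃ C > 0, ∀ t ≥ 1, ∀ i j k, |υ t i j k - f t j k| ≤ C / t := by
  set T := N * TB
  have hN : 0 < N := Fin.pos_iff_nonempty.2 hconn.nonempty
  have hstep (s : ℕ) (hs : 1 ≤ s) (d : ℝ) (hd : ∀ i j k, |υ s i j k - f s j k| ≤ d)
      (i j : Fin N) (k : Fin K) :
      |υ (s + T) i j k - f (s + T) j k| ≤ (1 - η ^ T) * d + 2 * T / s := by
    have hx : IsAnchoredAveraging (fun r i l => w (s + r + 1) j i l)
        (fun r i => υ (s + r) i j k) j :=
      ⟨fun r i l => hwnn _ (by omega) j i l, fun r i => hwsum _ (by omega) j i,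
        fun r i hi => hυrec (s + r + 1) (by omega) i j (Ne.symm hi) k⟩
    have hact (i l : Fin N)
        (hil : (SimpleGraph.fromRel fun i j : Fin N => {t : ℕ | Adj t i j}.Infinite).Adj i l)
        (m : ℕ) : ∃ τ < TB, η ≤ w (s + (m * TB + τ) + 1) j i l := by
      obtain ⟨-, hinf⟩ := SimpleGraph.fromRel_adj _ _ _ |>.1 hil
      obtain ⟨τ, hτ, hadj⟩ := hcom i l (hinf.elim id fun h => h.mono fun t => hAdjSymm t l i)
        (s + m * TB + 1) (by omega)
      refine ⟨τ, hτ, ?_⟩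
      rw [show s + (m * TB + τ) + 1 = s + m * TB + 1 + τ by ring]
      exact hwpos _ (by omega) j i l (Or.inl hadj)
    have hwin := hx.abs_sub_anchor_le hconn hη0.le hη1
      (fun r i => hwpos _ (by omega) j i i (Or.inr rfl)) hact (T := T) (by simp [T])
      (y := fun r => f (s + r) j k) (D := T / s) (fun i => hd i j k)
      (fun r _ => congrFun (hυself (s + r) (by omega) j) k)
      (fun r hr => (dfp_freq_window_drift hf hfrec hs j k r).trans (by gcongr)) i
    simpa [mul_div_assoc] using hwin
  obtain ⟨C, hC, hle⟩ := exists_le_div_of_window_contraction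
    (e := fun t (p : Fin N × Fin N × Fin K) => |υ t p.1 p.2.1 p.2.2 - f t p.2.1 p.2.2|)
    (lam := η ^ T) (A := 2 * T) (Nat.mul_pos hN hTB) (pow_pos hη0 T)
    (fun t _ p => abs_sub_le_one_of_mem_stdSimplex (hυ t _ _) (hf t _) _)
    fun s hs d _ hd p => hstep s hs d (fun i j k => hd (i, j, k)) p.1 p.2.1 p.2.2
  exact ⟨C, hC, fun t ht i j k => hle t ht (i, j, k)⟩

end DecentralizedFictitiousPlay

lemma sub_mul_log_div_sq_le {t : ℕ} (ht : 3 ≤ t) {ε δ n A B S X : ℝ} (hA : 0 ≤ A) (hB : 0 ≤ B)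
    (hS : ε - n * δ - A / t ≤ S) (hX : ((t : ℝ) + 1)⁻¹ * S - B * (((t : ℝ) + 1)⁻¹) ^ 2 ≤ X) :
    (ε - n * δ) / (t + 1) - (A + B + 1) * Real.log t / (t : ℝ) ^ 2 ≤ X := by
  have ht' : (3 : ℝ) ≤ t := by exact_mod_cast ht
  have hlog : 1 ≤ Real.log t := by
    rw [Real.le_log_iff_exp_le (by linarith)]
    linarith [Real.exp_one_lt_d9]
  set c := ((t : ℝ) + 1)⁻¹
  have hc0 : 0 ≤ c := by positivity
  have hct : c ≤ (t : ℝ)⁻¹ := inv_anti₀ (by positivity) (by linarith)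
  have hA' : c * (A / t) ≤ A / t ^ 2 := by
    rw [pow_two, ← div_div, div_eq_inv_mul (A / t)]
    exact mul_le_mul_of_nonneg_right hct (by positivity)
  have hB' : B * c ^ 2 ≤ B / t ^ 2 := by
    rw [div_eq_mul_inv, ← inv_pow]
    gcongr
  have hlog' : (A + B) / t ^ 2 ≤ (A + B + 1) * Real.log t / t ^ 2 := by
    gcongr
    nlinarith
  have hε : (ε - n * δ) / (t + 1) = c * (ε - n * δ) := div_eq_inv_mul _ _
  rw [add_div] at hlog'
  linarith [mul_le_mul_of_nonneg_left hS hc0]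

theorem dfp_potential_increase_general {N K : ℕ}
    -- the game
    (u : Fin N → (Fin N → Fin K) → ℝ)
    -- time-varying communication network: `Adj t i j` iff `(i,j) ∈ E_t`
    (Adj : ℕ → Fin N → Fin N → Prop)
    (hAdjSymm : ∀ t i j, Adj t i j → Adj t j i)
    -- communication weights: `w t j i l` is `w^i_{jl,t}`
    (w : ℕ → Fin N → Fin N → Fin N → ℝ)
    -- actions, empirical frequencies and local estimates of the DFP iterates:
    -- `υ t i j` is agent `i`'s estimate `υ^i_{j,t}` of `f_{j,t}`
    (a : ℕ → Fin N → Fin K)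
    (f : ℕ → Fin N → Fin K → ℝ)
    (υ : ℕ → Fin N → Fin N → Fin K → ℝ)
    -- Assumption 1 (i): connectivity of the graph of infinitely occurring edges
    (hconn : (SimpleGraph.fromRel fun i j : Fin N =>
      {t : ℕ | Adj t i j}.Infinite).Connected)
    -- Assumption 1 (ii): bounded communication intervals
    (hbddcom : ∃ TB : ℕ, 0 < TB ∧ ∀ i j, {t : ℕ | Adj t i j}.Infinite →
      ∀ t, 1 ≤ t → ∃ τ < TB, Adj (t + τ) i j)
    -- Assumption 2: weights are positive on neighbors, zero otherwise,
    -- each agent fully trusts itself about itself, and rows sum to one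
    (η : ℝ) (hη0 : 0 < η) (hη1 : η < 1)
    (hwpos : ∀ t, 1 ≤ t → ∀ j i l : Fin N, (Adj t i l ∨ l = i) → η ≤ w t j i l)
    (hwzero : ∀ t, 1 ≤ t → ∀ j i l : Fin N, ¬(Adj t i l ∨ l = i) → w t j i l = 0)
    (hwsum : ∀ t, 1 ≤ t → ∀ j i, ∑ l, w t j i l = 1)
    -- DFP dynamics: empirical frequency update
    (hf0 : ∀ i, f 0 i ∈ stdSimplex ℝ (Fin K))
    (hfrec : ∀ t, 1 ≤ t → ∀ i k,
      f t i k = ((t : ℝ) - 1) / t * f (t - 1) i k + (1 / t) * purePt (a t i) k)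
    -- DFP dynamics: best response against local estimates
    (hbr : ∀ t, 1 ≤ t → ∀ i, ∀ k : Fin K,
      mixedExt (u i) (Function.update (fun j => υ (t - 1) i j) i (purePt (a t i))) ≥
        mixedExt (u i) (Function.update (fun j => υ (t - 1) i j) i (purePt k)))
    -- DFP dynamics: estimate updates
    (hυself : ∀ t, 1 ≤ t → ∀ i, υ t i i = f t i)
    (hυrec : ∀ t, 1 ≤ t → ∀ i j, j ≠ i → ∀ k,
      υ t i j k = ∑ l, w t j i l * υ (t - 1) l j k)
    -- initial estimates agree with initial empirical frequencies
    (hinit : ∀ i j, υ 0 i j = f 0 j)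
    -- Γ is a δ-near potential game whose closest potential game `uhat`
    -- has potential `φ`
    (δ : ℝ)
    (uhat : Fin N → (Fin N → Fin K) → ℝ) (φ : (Fin N → Fin K) → ℝ)
    (hpot : IsPotential uhat φ)
    (hnear : PairwiseDiffLe u uhat δ) :
    ∀ ε : ℝ, 0 ≤ ε → ∃ C > (0 : ℝ), ∃ T : ℕ, ∀ t : ℕ, T ≤ t →
      ¬ IsEpsNash u ε (f t) →
      mixedExt φ (f (t + 1)) - mixedExt φ (f t) ≥
        (ε - N * δ) / (t + 1) - C * Real.log t / (t : ℝ) ^ 2 := by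
  intro ε _
  obtain ⟨TB, hTB, hcom⟩ := hbddcom
  have hwnn := dfp_weight_nonneg Adj hη0.le hwpos hwzero
  have hf := dfp_freq_mem_stdSimplex hf0 hfrec
  have hυ := dfp_estimate_mem_stdSimplex hf hwnn hwsum hυself hυrec hinit
  obtain ⟨C₁, hC₁, herr⟩ := dfp_estimate_error_le Adj hAdjSymm hconn hTB hcom hη0 hη1.le
    hwpos hwnn hwsum hf hfrec hυ hυself hυrec
  set Mu := ∑ i, ∑ b, |u i b|
  refine ⟨2 * N ^ 2 * (Mu * C₁) + 2 * N ^ 2 * ∑ b, |φ b| + 1, by positivity, 3,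
    fun t ht hne => ?_⟩
  have happrox (i : Fin N) : ∀ τ ∈ stdSimplex ℝ (Fin K),
      mixedExt (u i) (Function.update (f t) i τ) ≤
        mixedExt (u i) (Function.update (f t) i (purePt (a (t + 1) i))) +
          2 * (Mu * (N * (C₁ / t))) := fun τ hτ =>
    (mixedExt_update_le_of_forall_purePt_le (u i) (hf t) (hυ t i)
      (fun j k => abs_sub_comm (f t j k) _ ▸ herr t (by omega) i j k)
      (hbr (t + 1) (by omega) i) hτ).trans (by
        gcongr
        exact single_le_sum (f := fun i => ∑ b, |u i b|) (fun _ _ => by positivity)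
          (mem_univ i))
  have hgain := sub_le_sum_mixedExt_potential_sub hpot hnear (hf t) hne happrox
  have hstep := mul_sum_sub_le_mixedExt_sub φ (hf t)
    (fun i => purePt_mem_stdSimplex (a (t + 1) i)) (c := ((t : ℝ) + 1)⁻¹) (by positivity)
    (inv_le_one_of_one_le₀ (by linarith))
  rw [← dfp_freq_succ hfrec] at hstep
  refine sub_mul_log_div_sq_le ht (by positivity) (by positivity) ?_ hstep
  linarith [show (N : ℝ) * (2 * (Mu * (N * (C₁ / t))) + δ) =
    N * δ + 2 * N ^ 2 * (Mu * C₁) / t by ring]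

/-- Lemma 2: one-step potential increase along DFP in a
δ-near potential game, outside the ε-equilibrium set. -/
theorem dfp_potential_increase {N K : ℕ}
    -- the game
    (u : Fin N → (Fin N → Fin K) → ℝ)
    -- time-varying communication network: `Adj t i j` iff `(i,j) ∈ E_t`
    (Adj : ℕ → Fin N → Fin N → Prop)
    (hAdjSymm : ∀ t i j, Adj t i j → Adj t j i)
    -- communication weights: `w t j i l` is `w^i_{jl,t}`
    (w : ℕ → Fin N → Fin N → Fin N → ℝ)
    -- actions, empirical frequencies and local estimates of the DFP iterates:
    -- `υ t i j` is agent `i`'s estimate `υ^i_{j,t}` of `f_{j,t}`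
    (a : ℕ → Fin N → Fin K)
    (f : ℕ → Fin N → Fin K → ℝ)
    (υ : ℕ → Fin N → Fin N → Fin K → ℝ)
    -- Assumption 1 (i): connectivity of the graph of infinitely occurring edges
    (hconn : (SimpleGraph.fromRel fun i j : Fin N =>
      {t : ℕ | Adj t i j}.Infinite).Connected)
    -- Assumption 1 (ii): bounded communication intervals
    (hbddcom : ∃ TB : ℕ, 0 < TB ∧ ∀ i j, {t : ℕ | Adj t i j}.Infinite →
      ∀ t, 1 ≤ t → ∃ τ < TB, Adj (t + τ) i j)
    -- Assumption 2: weights are positive on neighbors, zero otherwise,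
    -- each agent fully trusts itself about itself, and rows sum to one
    (η : ℝ) (hη0 : 0 < η) (hη1 : η < 1)
    (hwpos : ∀ t, 1 ≤ t → ∀ j i l : Fin N, (Adj t i l ∨ l = i) → η ≤ w t j i l)
    (hwzero : ∀ t, 1 ≤ t → ∀ j i l : Fin N, ¬(Adj t i l ∨ l = i) → w t j i l = 0)
    (hwself : ∀ t, 1 ≤ t → ∀ i, w t i i i = 1)
    (hwsum : ∀ t, 1 ≤ t → ∀ j i, ∑ l, w t j i l = 1)
    -- DFP dynamics: empirical frequency update
    (hf0 : ∀ i, f 0 i ∈ stdSimplex ℝ (Fin K))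
    (hfrec : ∀ t, 1 ≤ t → ∀ i k,
      f t i k = ((t : ℝ) - 1) / t * f (t - 1) i k + (1 / t) * purePt (a t i) k)
    -- DFP dynamics: best response against local estimates
    (hbr : ∀ t, 1 ≤ t → ∀ i, ∀ k : Fin K,
      mixedExt (u i) (Function.update (fun j => υ (t - 1) i j) i (purePt (a t i))) ≥
        mixedExt (u i) (Function.update (fun j => υ (t - 1) i j) i (purePt k)))
    -- DFP dynamics: estimate updates
    (hυself : ∀ t, 1 ≤ t → ∀ i, υ t i i = f t i)
    (hυrec : ∀ t, 1 ≤ t → ∀ i j, j ≠ i → ∀ k,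
      υ t i j k = ∑ l, w t j i l * υ (t - 1) l j k)
    -- initial estimates agree with initial empirical frequencies
    (hinit : ∀ i j, υ 0 i j = f 0 j)
    -- Γ is a δ-near potential game whose closest potential game `uhat`
    -- has potential `φ`
    (δ : ℝ) (hδ : 0 ≤ δ)
    (uhat : Fin N → (Fin N → Fin K) → ℝ) (φ : (Fin N → Fin K) → ℝ)
    (hpot : IsPotential uhat φ)
    (hnear : PairwiseDiffLe u uhat δ) :
    ∀ ε : ℝ, 0 ≤ ε → ∃ C > (0 : ℝ), ∃ T : ℕ, ∀ t : ℕ, T ≤ t →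
      ¬ IsEpsNash u ε (f t) →
      mixedExt φ (f (t + 1)) - mixedExt φ (f t) ≥
        (ε - N * δ) / (t + 1) - C * Real.log t / (t : ℝ) ^ 2 :=
  dfp_potential_increase_general u Adj hAdjSymm w a f υ hconn hbddcom η hη0 hη1 hwpos hwzero hwsum
    hf0 hfrec hbr hυself hυrec hinit δ uhat φ hpot hnear
end
end

section
/- Let (f_t)_{t ≥ 1} be a sequence in Δ^N, let Φ : Δ^N → ℝ, let δ ≥ 0, let 0 < ε₁ < ε₂, and let T be such that for all t ≥ T and each ε ∈ {ε₁, ε₂}: f_t ∉ Σ_{Nδ+ε} implies Φ(f_{t+1}) − Φ(f_t) ≥ 2ε/(3(t+1)). Let T₁, T₂, T₂', T₁' be time steps with T < T₁ ≤ T₂ < T₂' ≤ T₁' such that: f_{T₁−1} ∈ Σ_{Nδ+ε₁} and f_t ∉ Σ_{Nδ+ε₁} for all T₁ ≤ t < T₁'; f_{T₂−1} ∈ Σ_{Nδ+ε₂} and f_t ∉ Σ_{Nδ+ε₂} for all T₂ ≤ t < T₂'; f_{T₂'} ∈ Σ_{Nδ+ε₂}; and f_{T₁'} ∈ Σ_{Nδ+ε₁}.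 Then Φ(f_{T₁'}) − Φ(f_{T₁}) ≥ Σ_{t=T₂}^{T₂'−1} 2ε₂/(3(t+1)). -/
open scoped BigOperators

noncomputable section

/-- Lemma 3, excursion lower bound. -/
theorem excursion_lower_bound {N K : ℕ}
    (u : Fin N → (Fin N → Fin K) → ℝ)
    (f : ℕ → Fin N → Fin K → ℝ)
    (hfΔ : ∀ t i, f t i ∈ stdSimplex ℝ (Fin K))
    (Φ : (Fin N → Fin K → ℝ) → ℝ)
    (δ : ℝ) (hδ : 0 ≤ δ)
    (ε₁ ε₂ : ℝ) (hε₁ : 0 < ε₁) (hε₁₂ : ε₁ < ε₂)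
    (T : ℕ)
    (hstep : ∀ t, T ≤ t → ∀ ε, (ε = ε₁ ∨ ε = ε₂) →
      ¬ IsEpsNash u (N * δ + ε) (f t) →
      Φ (f (t + 1)) - Φ (f t) ≥ 2 * ε / (3 * (t + 1)))
    (T₁ T₂ T₂' T₁' : ℕ)
    (hTT₁ : T < T₁) (hT₁T₂ : T₁ ≤ T₂) (hT₂T₂' : T₂ < T₂') (hT₂'T₁' : T₂' ≤ T₁')
    (h1 : IsEpsNash u (N * δ + ε₁) (f (T₁ - 1)))
    (h1' : ∀ t, T₁ ≤ t → t < T₁' → ¬ IsEpsNash u (N * δ + ε₁) (f t))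
    (h2 : IsEpsNash u (N * δ + ε₂) (f (T₂ - 1)))
    (h2' : ∀ t, T₂ ≤ t → t < T₂' → ¬ IsEpsNash u (N * δ + ε₂) (f t))
    (h3 : IsEpsNash u (N * δ + ε₂) (f T₂'))
    (h4 : IsEpsNash u (N * δ + ε₁) (f T₁')) :
    Φ (f T₁') - Φ (f T₁) ≥ ∑ t ∈ Finset.Ico T₂ T₂', 2 * ε₂ / (3 * (t + 1)) := by
  have hT₁T₁' : T₁ ≤ T₁' := le_trans hT₁T₂ (le_trans hT₂T₂'.le hT₂'T₁')
  have hT₂T₁' : T₂ ≤ T₁' := le_trans hT₂T₂'.le hT₂'T₁'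
  set d : ℕ → ℝ := fun t => Φ (f (t + 1)) - Φ (f t) with hd
  have htel : ∑ t ∈ Finset.Ico T₁ T₁', d t = Φ (f T₁') - Φ (f T₁) := by
    rw [Finset.sum_Ico_eq_sub _ hT₁T₁', Finset.sum_range_sub (fun n => Φ (f n)),
      Finset.sum_range_sub (fun n => Φ (f n))]
    ring
  have hsplit1 : ∑ t ∈ Finset.Ico T₁ T₂, d t + ∑ t ∈ Finset.Ico T₂ T₁', d t
      = ∑ t ∈ Finset.Ico T₁ T₁', d t := Finset.sum_Ico_consecutive _ hT₁T₂ hT₂T₁'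
  have hsplit2 : ∑ t ∈ Finset.Ico T₂ T₂', d t + ∑ t ∈ Finset.Ico T₂' T₁', d t
      = ∑ t ∈ Finset.Ico T₂ T₁', d t := Finset.sum_Ico_consecutive _ hT₂T₂'.le hT₂'T₁'
  have hε₁step : ∀ t, T₁ ≤ t → t < T₁' → (0:ℝ) ≤ d t := by
    intro t ht ht'
    have := hstep t (le_trans hTT₁.le ht) ε₁ (Or.inl rfl) (h1' t ht ht')
    have hpos : (0:ℝ) ≤ 2 * ε₁ / (3 * (t + 1)) := by positivity
    exact le_trans hpos this
  have hA : (0:ℝ) ≤ ∑ t ∈ Finset.Ico T₁ T₂, d t := by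
    apply Finset.sum_nonneg
    intro t ht
    rw [Finset.mem_Ico] at ht
    exact hε₁step t ht.1 (lt_of_lt_of_le ht.2 hT₂T₁')
  have hC : (0:ℝ) ≤ ∑ t ∈ Finset.Ico T₂' T₁', d t := by
    apply Finset.sum_nonneg
    intro t ht
    rw [Finset.mem_Ico] at ht
    exact hε₁step t (le_trans hT₁T₂ (le_trans hT₂T₂'.le ht.1)) ht.2
  have hB : ∑ t ∈ Finset.Ico T₂ T₂', d t ≥ ∑ t ∈ Finset.Ico T₂ T₂', 2 * ε₂ / (3 * (t + 1)) := by
    apply Finset.sum_le_sum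
    intro t ht
    rw [Finset.mem_Ico] at ht
    exact hstep t (le_trans hTT₁.le (le_trans hT₁T₂ ht.1)) ε₂ (Or.inr rfl) (h2' t ht.1 ht.2)
  linarith
end
end

section
/- Suppose the game Γ has exactly M Nash equilibria σ^{*(1)},…,σ^{*(M)} ∈ Δ^N (M ≥ 1) and let q(α) = max_{σ ∈ Σ_α} min_{1 ≤ m ≤ M} ‖σ − σ^{*(m)}‖ for α ≥ 0. Then q : ℝ_{≥0} → ℝ is upper semicontinuous. -/
open scoped BigOperators

noncomputable section

/-- Distance of `σ` to the nearest of the equilibria `σstar m`. -/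
def minDist {N K M : ℕ} (σstar : Fin M → Fin N → Fin K → ℝ)
    (σ : Fin N → Fin K → ℝ) : ℝ :=
  ⨅ m : Fin M, eNorm (fun i k => σ i k - σstar m i k)

/-- `q α` : the largest distance from an `α`-Nash equilibrium to the set of
Nash equilibria. -/
def qfun {N K M : ℕ} (u : Fin N → (Fin N → Fin K) → ℝ)
    (σstar : Fin M → Fin N → Fin K → ℝ) (α : ℝ) : ℝ :=
  sSup (minDist σstar '' {σ | IsEpsNash u α σ})

/-!
The `α`-Nash equilibria form a compact set `Σ_α` which grows with `α`, and `Σ_x` is the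
intersection of the `Σ_β` for `β > x`, since the defining inequalities are continuous in `σ` and
non-strict in `ε`.
If `q x < y`, the closed sets `{σ ∈ Σ_β | y ≤ minDist σ}` for `β > x` are directed and have empty
intersection, so compactness gives one of them that is empty: `minDist < y` on `Σ_β`. For
`0 ≤ α < β` the supremum `q α` is attained on the compact set `Σ_α ⊆ Σ_β`, hence `q α < y`.
-/

open Set Filter Topology

section SupOverMonotoneFamily

variable {X : Type*} [TopologicalSpace X] [T2Space X] {f : X → ℝ} {S : ℝ → Set X}

theorem exists_gt_forall_lt_of_forall_le (hf : Continuous f) (hS : Monotone S)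
    (hS_compact : ∀ α, IsCompact (S α)) {x : ℝ} (hS_right : ∀ σ, (∀ β > x, σ ∈ S β) → σ ∈ S x)
    {c y : ℝ} (hc : ∀ σ ∈ S x, f σ ≤ c) (hcy : c < y) : ∃ β > x, ∀ σ ∈ S β, f σ < y := by
  let t : Ioi x → Set X := fun β => S β ∩ {σ | y ≤ f σ}
  have ht_closed : ∀ β, IsClosed (t β) := fun β =>
    (hS_compact β).isClosed.inter (isClosed_le continuous_const hf)
  have ht_directed : Directed (· ⊇ ·) t :=
    Monotone.directed_ge fun β₁ β₂ h => inter_subset_inter_left _ (hS h)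
  have : Nonempty (Ioi x) := ⟨⟨x + 1, by simp⟩⟩
  have h_empty : S (x + 1) ∩ ⋂ β, t β = ∅ := by
    refine eq_empty_of_forall_notMem fun σ ⟨_, hσ⟩ => ?_
    rw [mem_iInter] at hσ
    have hσx : σ ∈ S x := hS_right σ fun β hβ => (hσ ⟨β, hβ⟩).1
    exact (hc σ hσx).not_gt (hcy.trans_le (hσ ⟨x + 1, by simp⟩).2)
  obtain ⟨⟨β, hβ⟩, hβ_empty⟩ := (hS_compact _).elim_directed_family_closed t ht_closed h_empty
    ht_directed
  refine ⟨min β (x + 1), lt_min hβ (by linarith), fun σ hσ => not_le.1 fun hyσ => ?_⟩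
  have : σ ∈ S (x + 1) ∩ t ⟨β, hβ⟩ :=
    ⟨hS (min_le_right _ _) hσ, hS (min_le_left _ _) hσ, hyσ⟩
  simp [hβ_empty] at this

theorem upperSemicontinuousOn_sSup_image (hf : Continuous f) (hS : Monotone S)
    (hS_compact : ∀ α, IsCompact (S α)) {s : Set ℝ} (hS_ne : ∀ α ∈ s, (S α).Nonempty)
    (hS_right : ∀ x ∈ s, ∀ σ, (∀ β > x, σ ∈ S β) → σ ∈ S x) :
    UpperSemicontinuousOn (fun α => sSup (f '' S α)) s := by
  intro x hx y hy
  have h_le : ∀ σ ∈ S x, f σ ≤ sSup (f '' S x) := fun σ hσ =>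
    le_csSup ((hS_compact x).image hf).bddAbove (mem_image_of_mem f hσ)
  obtain ⟨β, hxβ, hβ⟩ :=
    exists_gt_forall_lt_of_forall_le hf hS hS_compact (hS_right x hx) h_le hy
  filter_upwards [nhdsWithin_le_nhds (Iio_mem_nhds hxβ), self_mem_nhdsWithin] with α hαβ hα
  obtain ⟨σ, hσ, hσ_eq⟩ := ((hS_compact α).image hf).sSup_mem ((hS_ne α hα).image f)
  rw [← hσ_eq]
  exact hβ σ (hS (le_of_lt hαβ) hσ)

end SupOverMonotoneFamily

section EpsNash

variable {N K : ℕ} {u : Fin N → (Fin N → Fin K) → ℝ}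

theorem continuous_mixedExt (v : (Fin N → Fin K) → ℝ) :
    Continuous (mixedExt v) := by
  unfold mixedExt
  fun_prop

theorem isClosed_setOf_isEpsNash (u : Fin N → (Fin N → Fin K) → ℝ) (ε : ℝ) :
    IsClosed {σ | IsEpsNash u ε σ} := by
  simp only [IsEpsNash, ofPred_and, ofPred_forall, ge_iff_le]
  refine (isClosed_iInter fun i => ?_).inter
    (isClosed_iInter fun i => isClosed_iInter fun τ => isClosed_iInter fun _ => ?_)
  · exact (isClosed_stdSimplex ℝ (Fin K)).preimage (continuous_apply i)
  · exact isClosed_le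
      (((continuous_mixedExt _).comp (continuous_id.update i continuous_const)).sub
        continuous_const)
      (continuous_mixedExt _)

theorem isCompact_setOf_isEpsNash (u : Fin N → (Fin N → Fin K) → ℝ) (ε : ℝ) :
    IsCompact {σ | IsEpsNash u ε σ} :=
  (isCompact_univ_pi fun _ => isCompact_stdSimplex ℝ (Fin K)).of_isClosed_subset
    (isClosed_setOf_isEpsNash u ε) fun _ hσ => mem_univ_pi.2 hσ.1

theorem IsEpsNash.mono {ε ε' : ℝ} {σ : Fin N → Fin K → ℝ} (hσ : IsEpsNash u ε σ) (h : ε ≤ ε') :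
    IsEpsNash u ε' σ :=
  ⟨hσ.1, fun i τ hτ => (hσ.2 i τ hτ).trans' (by linarith)⟩

theorem isEpsNash_of_forall_gt {ε : ℝ} {σ : Fin N → Fin K → ℝ}
    (h : ∀ ε' > ε, IsEpsNash u ε' σ) : IsEpsNash u ε σ := by
  refine ⟨(h (ε + 1) (by linarith)).1, fun i τ hτ => ?_⟩
  have : mixedExt (u i) (Function.update σ i τ) - mixedExt (u i) σ ≤ ε :=
    le_of_forall_gt_imp_ge_of_dense fun ε' hε' => by linarith [(h ε' hε').2 i τ hτ]
  linarith

end EpsNash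

theorem continuous_minDist {N K M : ℕ} (σstar : Fin M → Fin N → Fin K → ℝ) :
    Continuous (minDist σstar) := by
  rcases isEmpty_or_nonempty (Fin M) with hM | hM
  · have : minDist σstar = fun _ => 0 := funext fun _ => Real.iInf_of_isEmpty _
    rw [this]
    exact continuous_const
  · have : minDist σstar = fun σ => Finset.univ.inf' Finset.univ_nonempty
        fun m => eNorm fun i k => σ i k - σstar m i k := by
      ext σ
      exact (Finset.inf'_univ_eq_ciInf _).symm
    rw [this]
    refine Continuous.finset_inf'_apply _ fun m _ => ?_
    unfold eNorm
    fun_prop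

theorem qfun_upperSemicontinuous_general {N K M : ℕ}
    (u : Fin N → (Fin N → Fin K) → ℝ)
    (σstar : Fin M → Fin N → Fin K → ℝ)
    (hM : 1 ≤ M)
    (hNE : ∀ m, IsEpsNash u 0 (σstar m)) :
    UpperSemicontinuousOn (qfun u σstar) (Set.Ici (0 : ℝ)) :=
  upperSemicontinuousOn_sSup_image (continuous_minDist σstar)
    (fun _ _ h _ hσ => hσ.mono h) (isCompact_setOf_isEpsNash u)
    (fun _ hα => ⟨σstar ⟨0, hM⟩, (hNE _).mono hα⟩)
    (fun _ _ _ => isEpsNash_of_forall_gt)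

/-- `q` is upper semicontinuous on `[0, ∞)`. -/
theorem qfun_upperSemicontinuous {N K M : ℕ}
    (u : Fin N → (Fin N → Fin K) → ℝ)
    (σstar : Fin M → Fin N → Fin K → ℝ)
    (hM : 1 ≤ M)
    (hinj : Function.Injective σstar)
    (hNE : ∀ m, IsEpsNash u 0 (σstar m))
    (hall : ∀ σ, IsEpsNash u 0 σ → ∃ m, σ = σstar m) :
    UpperSemicontinuousOn (qfun u σstar) (Set.Ici (0 : ℝ)) :=
  qfun_upperSemicontinuous_general u σstar hM hNE
end
end

section
/- Let N ≥ 1, d > 0, ε > 0, and let T₂ < T₂' be integers with T₂ ≥ 1. Let (f_t) be a sequence in a normed vector space with ‖f_{t+1} − f_t‖ ≤ 2N/(t+1) for all T₂ ≤ t < T₂' and ‖f_{T₂'} − f_{T₂}‖ > d/2, and let (u_t) be a real sequence with u_{t+1} − u_t ≥ 2ε/(3(t+1)) for all T₂ ≤ t < T₂'. Then u_{T₂'} − u_{T₂} ≥ ε·d/(6N). -/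
open scoped BigOperators

noncomputable section

/-- potential gain along an excursion whose endpoints are at
distance more than `d/2`. -/
theorem excursion_potential_gain {V : Type*} [NormedAddCommGroup V] [NormedSpace ℝ V]
    (N : ℕ) (hN : 1 ≤ N) (d ε : ℝ) (hd : 0 < d) (hε : 0 < ε)
    (T₂ T₂' : ℕ) (hT₂ : 1 ≤ T₂) (hTT : T₂ < T₂')
    (f : ℕ → V) (u : ℕ → ℝ)
    (hstep : ∀ t, T₂ ≤ t → t < T₂' → ‖f (t + 1) - f t‖ ≤ 2 * N / (t + 1))
    (hsep : ‖f T₂' - f T₂‖ > d / 2)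
    (hgain : ∀ t, T₂ ≤ t → t < T₂' → u (t + 1) - u t ≥ 2 * ε / (3 * (t + 1))) :
    u T₂' - u T₂ ≥ ε * d / (6 * N) := by
  have hN' : (0:ℝ) < N := by exact_mod_cast Nat.lt_of_lt_of_le Nat.zero_lt_one hN
  set S : ℝ := ∑ t ∈ Finset.Ico T₂ T₂', (1:ℝ)/(t+1) with hS
  have htel_f : ∑ t ∈ Finset.Ico T₂ T₂', (f (t+1) - f t) = f T₂' - f T₂ := by
    rw [Finset.sum_Ico_eq_sub _ hTT.le, Finset.sum_range_sub, Finset.sum_range_sub]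
    abel
  have htel_u : ∑ t ∈ Finset.Ico T₂ T₂', (u (t+1) - u t) = u T₂' - u T₂ := by
    rw [Finset.sum_Ico_eq_sub _ hTT.le, Finset.sum_range_sub, Finset.sum_range_sub]
    ring
  have h1 : ‖f T₂' - f T₂‖ ≤ 2 * N * S := by
    rw [← htel_f]
    calc ‖∑ t ∈ Finset.Ico T₂ T₂', (f (t+1) - f t)‖
        ≤ ∑ t ∈ Finset.Ico T₂ T₂', ‖f (t+1) - f t‖ := norm_sum_le _ _
      _ ≤ ∑ t ∈ Finset.Ico T₂ T₂', 2 * N * (1/((t:ℝ)+1)) := by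
          apply Finset.sum_le_sum
          intro t ht
          rw [Finset.mem_Ico] at ht
          have := hstep t ht.1 ht.2
          rw [mul_one_div]
          exact this
      _ = 2 * N * S := by rw [hS, Finset.mul_sum]
  have hSd : d / (4*N) < S := by
    rw [div_lt_iff₀ (by positivity)]
    nlinarith [lt_of_lt_of_le hsep h1]
  have h2 : (2*ε/3) * S ≤ u T₂' - u T₂ := by
    rw [← htel_u, hS, Finset.mul_sum]
    apply Finset.sum_le_sum
    intro t ht
    rw [Finset.mem_Ico] at ht
    have hg := hgain t ht.1 ht.2
    have ht1 : ((t:ℝ)+1) ≠ 0 := by positivity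
    have heq : (2*ε/3)*(1/((t:ℝ)+1)) = 2*ε/(3*((t:ℝ)+1)) := by
      field_simp
    linarith [hg, heq.le]
  have hfin : ε * d / (6*N) ≤ (2*ε/3) * S := by
    have h3 : (2*ε/3) * (d/(4*N)) ≤ (2*ε/3) * S :=
      mul_le_mul_of_nonneg_left hSd.le (by positivity)
    have h4 : ε * d / (6*N) = (2*ε/3) * (d/(4*N)) := by
      field_simp
      ring
    linarith
  linarith
end
end

section
/- Let Γ = (u_i) and Γ̂ = (û_i) be two finite games with the same N players and K actions with maximum pairwise difference d(Γ, Γ̂) ≤ δ. Then the pairwise-difference bound extends to mixed strategies: for every player i, every σ ∈ Δ^N, and every σ'_i ∈ Δ, |(U_i(σ'_i, σ_{-i}) − U_i(σ)) − (Û_i(σ'_i, σ_{-i}) − Û_i(σ))| ≤ δ, where U_i, Û_i are the mixed extensions of u_i, û_i. -/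
open scoped BigOperators

noncomputable section

namespace PDAux

variable {N K : ℕ}

/-- Recombine a choice for player `i` with choices for the other players. -/
def F (i : Fin N) (k : Fin K) (b : {j : Fin N // j ≠ i} → Fin K) : Fin N → Fin K :=
  fun j => if h : j = i then k else b ⟨j, h⟩

lemma F_apply_self (i : Fin N) (k : Fin K) (b : {j : Fin N // j ≠ i} → Fin K) :
    F i k b i = k := dif_pos rfl

lemma F_apply_ne (i : Fin N) (k : Fin K) (b : {j : Fin N // j ≠ i} → Fin K)
    {j : Fin N} (h : j ≠ i) : F i k b j = b ⟨j, h⟩ := dif_neg h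

lemma update_F (i : Fin N) (k k' : Fin K) (b : {j : Fin N // j ≠ i} → Fin K) :
    Function.update (F i k' b) i k = F i k b := by
  funext j
  by_cases h : j = i
  · subst h; simp [F]
  · simp [Function.update_of_ne h, F_apply_ne i _ b h]

/-- the splitting equivalence -/
def splitEquiv (i : Fin N) : (Fin K × ({j : Fin N // j ≠ i} → Fin K)) ≃ (Fin N → Fin K) where
  toFun p := F i p.1 p.2
  invFun a := (a i, fun j => a j.1)
  left_inv p := Prod.ext (F_apply_self i p.1 p.2)
    (funext fun j => F_apply_ne i p.1 p.2 j.2)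
  right_inv a := by
    funext j
    by_cases h : j = i
    · simp [F, h]
    · exact F_apply_ne i _ _ h

lemma prod_F (i : Fin N) (π : Fin N → Fin K → ℝ) (k : Fin K)
    (b : {j : Fin N // j ≠ i} → Fin K) :
    ∏ j, π j (F i k b j) = π i k * ∏ j : {j : Fin N // j ≠ i}, π j.1 (b j) := by
  rw [Finset.prod_eq_mul_prod_sdiff_singleton_of_mem (Finset.mem_univ i)
      (fun j => π j (F i k b j)), F_apply_self]
  congr 1
  rw [Finset.prod_subtype (Finset.univ \ {i}) (p := fun j => j ≠ i) (by simp)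
      (fun j => π j (F i k b j))]
  exact Finset.prod_congr rfl fun j _ => by rw [F_apply_ne i k b j.2]

lemma mixedExt_eq (i : Fin N) (w : (Fin N → Fin K) → ℝ) (π : Fin N → Fin K → ℝ) :
    mixedExt w π = ∑ k, ∑ b : {j : Fin N // j ≠ i} → Fin K,
      w (F i k b) * (π i k * ∏ j : {j : Fin N // j ≠ i}, π j.1 (b j)) := by
  rw [mixedExt, ← Equiv.sum_comp (splitEquiv i) (fun a => w a * ∏ j, π j (a j)),
    Fintype.sum_prod_type]
  refine Finset.sum_congr rfl fun k _ => Finset.sum_congr rfl fun b _ => ?_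
  show w (F i k b) * ∏ j, π j (F i k b j) = _
  rw [prod_F]

lemma double_sum_trick (c t s : Fin K → ℝ) (ht : ∑ k, t k = 1) (hs : ∑ k, s k = 1) :
    ∑ k, (t k - s k) * c k = ∑ k, ∑ k', t k * s k' * (c k - c k') := by
  have h1 : ∀ k, ∑ k', t k * s k' * (c k - c k')
      = t k * c k - t k * ∑ k', s k' * c k' := by
    intro k
    have : ∀ k', t k * s k' * (c k - c k') = t k * (s k' * c k) - t k * (s k' * c k') := by
      intro k'; ring
    rw [Finset.sum_congr rfl fun k' _ => this k', Finset.sum_sub_distrib,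
      ← Finset.mul_sum, ← Finset.mul_sum, ← Finset.sum_mul, hs]
    ring_nf
  rw [Finset.sum_congr rfl fun k _ => h1 k, Finset.sum_sub_distrib, ← Finset.sum_mul, ht]
  simp only [sub_mul, Finset.sum_sub_distrib, one_mul]

end PDAux

open PDAux


/-- the pairwise-difference bound extends to mixed strategies. -/
theorem pairwiseDiff_mixed {N K : ℕ}
    (u v : Fin N → (Fin N → Fin K) → ℝ) (δ : ℝ)
    (hd : PairwiseDiffLe u v δ)
    (i : Fin N) (σ : Fin N → Fin K → ℝ)
    (hσ : ∀ j, σ j ∈ stdSimplex ℝ (Fin K))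
    (τ : Fin K → ℝ) (hτ : τ ∈ stdSimplex ℝ (Fin K)) :
    |(mixedExt (u i) (Function.update σ i τ) - mixedExt (u i) σ) -
      (mixedExt (v i) (Function.update σ i τ) - mixedExt (v i) σ)| ≤ δ := by
  classical
  set P : ({j : Fin N // j ≠ i} → Fin K) → ℝ :=
    fun b => ∏ j : {j : Fin N // j ≠ i}, σ j.1 (b j) with hP
  set D : (Fin N → Fin K) → ℝ := fun a => u i a - v i a with hD
  have hτ1 : ∑ k, τ k = 1 := hτ.2
  have hσ1 : ∑ k, σ i k = 1 := (hσ i).2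
  -- rewrite each mixedExt via the splitting
  have hup : ∀ k, (Function.update σ i τ) i k = τ k := fun k => by
    rw [Function.update_self]
  have hupj : ∀ (b : {j : Fin N // j ≠ i} → Fin K),
      (∏ j : {j : Fin N // j ≠ i}, (Function.update σ i τ) j.1 (b j)) = P b := by
    intro b
    exact Finset.prod_congr rfl fun j _ => by rw [Function.update_of_ne j.2]
  have key : ∀ w : (Fin N → Fin K) → ℝ,
      mixedExt w (Function.update σ i τ) - mixedExt w σ
        = ∑ b, P b * ∑ k, (τ k - σ i k) * w (F i k b) := by
    intro w
    rw [mixedExt_eq i w (Function.update σ i τ), mixedExt_eq i w σ]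
    simp only [hup, hP]
    have hre : ∀ (k : Fin K) (b : {j : Fin N // j ≠ i} → Fin K),
        (∏ j : {j : Fin N // j ≠ i}, (Function.update σ i τ) j.1 (b j))
          = ∏ j : {j : Fin N // j ≠ i}, σ j.1 (b j) :=
      fun k b => Finset.prod_congr rfl fun j _ => by rw [Function.update_of_ne j.2]
    rw [Finset.sum_congr rfl fun k _ => Finset.sum_congr rfl fun b _ => by rw [hre k b]]
    rw [← Finset.sum_sub_distrib,
      Finset.sum_congr rfl fun k _ => (Finset.sum_sub_distrib
        (f := fun b => w (F i k b) * (τ k * ∏ j : {j : Fin N // j ≠ i}, σ j.1 (b j)))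
        (g := fun b => w (F i k b) * (σ i k * ∏ j : {j : Fin N // j ≠ i}, σ j.1 (b j)))).symm,
      Finset.sum_comm]
    refine Finset.sum_congr rfl fun b _ => ?_
    rw [Finset.mul_sum]
    exact Finset.sum_congr rfl fun k _ => by ring
  have main : (mixedExt (u i) (Function.update σ i τ) - mixedExt (u i) σ) -
      (mixedExt (v i) (Function.update σ i τ) - mixedExt (v i) σ)
        = ∑ b, P b * ∑ k, ∑ k', τ k * σ i k' * (D (F i k b) - D (F i k' b)) := by
    rw [key (u i), key (v i), ← Finset.sum_sub_distrib]
    refine Finset.sum_congr rfl fun b _ => ?_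
    rw [← mul_sub, ← Finset.sum_sub_distrib,
      ← double_sum_trick (fun k => D (F i k b)) τ (σ i) hτ1 hσ1]
    congr 1
    exact Finset.sum_congr rfl fun k _ => by simp only [hD]; ring
  rw [main]
  have hPnn : ∀ b, 0 ≤ P b := fun b => Finset.prod_nonneg fun j _ => (hσ j.1).1 _
  have hPsum : ∑ b, P b = 1 := by
    rw [hP, ← Fintype.prod_sum (fun (j : {j : Fin N // j ≠ i}) k => σ j.1 k)]
    exact Finset.prod_eq_one fun j _ => (hσ j.1).2
  have hinner : ∀ b, |∑ k, ∑ k', τ k * σ i k' * (D (F i k b) - D (F i k' b))| ≤ δ := by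
    intro b
    calc |∑ k, ∑ k', τ k * σ i k' * (D (F i k b) - D (F i k' b))|
        ≤ ∑ k, ∑ k', |τ k * σ i k' * (D (F i k b) - D (F i k' b))| := by
          refine (Finset.abs_sum_le_sum_abs _ _).trans ?_
          exact Finset.sum_le_sum fun k _ => Finset.abs_sum_le_sum_abs _ _
      _ ≤ ∑ k, ∑ k', τ k * σ i k' * δ := by
          refine Finset.sum_le_sum fun k _ => Finset.sum_le_sum fun k' _ => ?_
          rw [abs_mul, abs_of_nonneg (mul_nonneg (hτ.1 k) ((hσ i).1 k'))]
          refine mul_le_mul_of_nonneg_left ?_ (mul_nonneg (hτ.1 k) ((hσ i).1 k'))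
          have := hd i (F i k' b) k
          rw [update_F] at this
          have heq : D (F i k b) - D (F i k' b)
              = (u i (F i k b) - u i (F i k' b)) - (v i (F i k b) - v i (F i k' b)) := by
            simp only [hD]; ring
          rw [heq]; exact this
      _ = δ := by
          simp only [← Finset.sum_mul]
          rw [Finset.sum_congr rfl fun k _ => by rw [← Finset.mul_sum, hσ1, mul_one],
            hτ1, one_mul]
  calc |∑ b, P b * ∑ k, ∑ k', τ k * σ i k' * (D (F i k b) - D (F i k' b))|
      ≤ ∑ b, |P b * ∑ k, ∑ k', τ k * σ i k' * (D (F i k b) - D (F i k' b))| :=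
        Finset.abs_sum_le_sum_abs _ _
    _ ≤ ∑ b, P b * δ := by
        refine Finset.sum_le_sum fun b _ => ?_
        rw [abs_mul, abs_of_nonneg (hPnn b)]
        exact mul_le_mul_of_nonneg_left (hinner b) (hPnn b)
    _ = δ := by rw [← Finset.sum_mul, hPsum, one_mul]
end
end
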